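/- arXiv:2504.01012 — 3 statements merged into one kernel-verified Lean document; each statement's English description precedes it below -/
import Mathlib

section
/- The recurrence e(n+1) = e(n) + (α n + θ e(n)) / (n + α + β − 1) with e(1) = 0, parameters α > 0, β ≥ 0, and 0 ≤ θ < 1, satisfies e(n)/n → α/(1−θ) as n → ∞. -/
/-! With `L = α / (1 - θ)` and `s = α + β - 1`, the error `y n = e n / n - L` obeys
`y (n + 1) = (1 - a n) * y n + b n` with `a n = ((1 - θ) n + s) / ((n + 1) (n + s)) ~ (1 - θ) / n`
and `b n = -s L / ((n + 1) (n + s)) = o(a n)`. This is Chung's situation: for every `ε > 0` the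
excess `(|y n| - ε)⁺` is eventually multiplied at each step by at most `1 - a n ≤ exp (-a n)`, and
`∑ a n = ∞` forces it to `0`. -/

open Filter Topology Asymptotics Finset

theorem tendsto_zero_of_le_one_sub_mul {u a : ℕ → ℝ} (hu : ∀ n, 0 ≤ u n)
    (ha : ∀ᶠ n in atTop, 0 ≤ a n) (ha_sum : ¬ Summable a)
    (hrec : ∀ᶠ n in atTop, u (n + 1) ≤ (1 - a n) * u n) : Tendsto u atTop (𝓝 0) := by
  obtain ⟨N, hN⟩ := eventually_atTop.1 (ha.and hrec)
  have hbound : ∀ k, u (k + N) ≤ Real.exp (-∑ i ∈ range k, a (i + N)) * u N := by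
    intro k
    induction k with
    | zero => simp
    | succ k ih =>
      calc u (k + 1 + N) ≤ (1 - a (k + N)) * u (k + N) := by
            rw [add_right_comm]; exact (hN _ (Nat.le_add_left _ _)).2
        _ ≤ Real.exp (-a (k + N)) * (Real.exp (-∑ i ∈ range k, a (i + N)) * u N) :=
            mul_le_mul (Real.one_sub_le_exp_neg _) ih (hu _) (Real.exp_pos _).le
        _ = Real.exp (-∑ i ∈ range (k + 1), a (i + N)) * u N := by
            rw [sum_range_succ, neg_add, Real.exp_add]; ring
  have hsum : Tendsto (fun k => ∑ i ∈ range k, a (i + N)) atTop atTop :=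
    (not_summable_iff_tendsto_nat_atTop_of_nonneg fun i => (hN _ (Nat.le_add_left _ _)).1).1
      ((summable_nat_add_iff N).not.2 ha_sum)
  have hexp : Tendsto (fun k => Real.exp (-∑ i ∈ range k, a (i + N)) * u N) atTop (𝓝 0) := by
    simpa using (Real.tendsto_exp_atBot.comp (tendsto_neg_atTop_atBot.comp hsum)).mul_const (u N)
  exact (tendsto_add_atTop_iff_nat N).1 (squeeze_zero (fun k => hu _) hbound hexp)

section Normed

variable {E : Type*} [NormedAddCommGroup E] [NormedSpace ℝ E]

theorem tendsto_zero_of_eq_one_sub_smul_add {y b : ℕ → E} {a : ℕ → ℝ}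
    (ha : ∀ᶠ n in atTop, 0 ≤ a n ∧ a n ≤ 1) (ha_sum : ¬ Summable a)
    (hb : b =o[atTop] a) (hy : ∀ᶠ n in atTop, y (n + 1) = (1 - a n) • y n + b n) :
    Tendsto y atTop (𝓝 0) := by
  refine Metric.tendsto_nhds.2 fun ε hε => ?_
  have hexcess : Tendsto (fun n => max (‖y n‖ - ε / 2) 0) atTop (𝓝 0) := by
    refine tendsto_zero_of_le_one_sub_mul (fun n => le_max_right _ _) (ha.mono fun n h => h.1)
      ha_sum ?_
    filter_upwards [ha, hy, hb.bound (half_pos hε)] with n ⟨ha0, ha1⟩ hyn hbn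
    rw [Real.norm_of_nonneg ha0] at hbn
    have hnorm : ‖y (n + 1)‖ ≤ (1 - a n) * ‖y n‖ + ε / 2 * a n := by
      calc ‖y (n + 1)‖ ≤ ‖(1 - a n) • y n‖ + ‖b n‖ := by rw [hyn]; exact norm_add_le _ _
        _ ≤ (1 - a n) * ‖y n‖ + ε / 2 * a n := by
          rw [norm_smul, Real.norm_of_nonneg (sub_nonneg.2 ha1)]; gcongr
    refine max_le ?_ (mul_nonneg (sub_nonneg.2 ha1) (le_max_right _ _))
    nlinarith [le_max_left (‖y n‖ - ε / 2) 0]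
  filter_upwards [hexcess.eventually (gt_mem_nhds (half_pos hε))] with n hn
  rw [dist_zero_right]
  linarith [le_max_left (‖y n‖ - ε / 2) 0]

theorem not_summable_of_tendsto_natCast_mul {a : ℕ → ℝ} {c : ℝ} (hc : 0 < c)
    (h : Tendsto (fun n : ℕ => n * a n) atTop (𝓝 c)) : ¬ Summable a := by
  intro hs
  refine Real.not_summable_natCast_inv ((summable_mul_left_iff (half_pos hc).ne').1 ?_)
  refine hs.of_norm_bounded_eventually_nat ?_
  filter_upwards [h.eventually (lt_mem_nhds (half_lt_self hc)), eventually_gt_atTop 0]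
    with n hn hn0
  have hn0' : (0 : ℝ) < n := Nat.cast_pos.2 hn0
  rw [Real.norm_of_nonneg (by positivity), ← div_eq_mul_inv, div_le_iff₀ hn0']
  linarith

theorem tendsto_zero_of_tendsto_natCast_mul {a : ℕ → ℝ} {c : ℝ}
    (h : Tendsto (fun n : ℕ => n * a n) atTop (𝓝 c)) : Tendsto a atTop (𝓝 0) := by
  have := (tendsto_inv_atTop_nhds_zero_nat (𝕜 := ℝ)).mul h
  rw [zero_mul] at this
  refine this.congr' ?_
  filter_upwards [eventually_gt_atTop 0] with n hn
  rw [← mul_assoc, inv_mul_cancel₀ (Nat.cast_ne_zero.2 hn.ne'), one_mul]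

theorem tendsto_zero_of_eq_one_sub_smul_add_of_tendsto_natCast_mul {y b : ℕ → E} {a : ℕ → ℝ}
    {c : ℝ} (hc : 0 < c)
    (ha : Tendsto (fun n : ℕ => n * a n) atTop (𝓝 c)) (hb : b =o[atTop] a)
    (hy : ∀ᶠ n in atTop, y (n + 1) = (1 - a n) • y n + b n) : Tendsto y atTop (𝓝 0) := by
  refine tendsto_zero_of_eq_one_sub_smul_add ?_ (not_summable_of_tendsto_natCast_mul hc ha) hb hy
  filter_upwards [ha.eventually (lt_mem_nhds hc), eventually_gt_atTop 0,
    (tendsto_zero_of_tendsto_natCast_mul ha).eventually (gt_mem_nhds one_pos)] with n hpos hn h1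
  exact ⟨(pos_of_mul_pos_right hpos (Nat.cast_nonneg n)).le, h1.le⟩

end Normed

namespace DAPA

noncomputable def rate (θ s : ℝ) (n : ℕ) : ℝ := ((1 - θ) * n + s) / ((n + 1) * (n + s))

noncomputable def drift (s L : ℝ) (n : ℕ) : ℝ := -(s * L) / ((n + 1) * (n + s))

theorem tendsto_natCast_mul_rate (θ s : ℝ) :
    Tendsto (fun n : ℕ => n * rate θ s n) atTop (𝓝 (1 - θ)) := by
  have hcont : ContinuousAt (fun t : ℝ => ((1 - θ) + s * t) / ((1 + t) * (1 + s * t))) 0 :=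
    by fun_prop (disch := norm_num)
  have := hcont.tendsto.comp (tendsto_inv_atTop_nhds_zero_nat (𝕜 := ℝ))
  simp only [mul_zero, add_zero, mul_one, div_one] at this
  refine this.congr' ?_
  filter_upwards [eventually_gt_atTop 0] with n hn
  have hn' : (n : ℝ) ≠ 0 := Nat.cast_ne_zero.2 hn.ne'
  simp only [Function.comp_apply, rate]
  field_simp

theorem drift_isLittleO_rate {θ : ℝ} (hθ : θ < 1) (s L : ℝ) : drift s L =o[atTop] rate θ s := by
  have hlin : Tendsto (fun n : ℕ => (1 - θ) * n + s) atTop atTop :=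
    tendsto_atTop_add_const_right _ _
      (tendsto_natCast_atTop_atTop.const_mul_atTop (sub_pos.2 hθ))
  have hnum : ∀ᶠ n : ℕ in atTop, 0 < (1 - θ) * n + s := hlin.eventually_gt_atTop 0
  have hden : ∀ᶠ n : ℕ in atTop, 0 < ((n : ℝ) + 1) * (n + s) := by
    filter_upwards [tendsto_natCast_atTop_atTop.eventually_gt_atTop (-s)] with n hn
    have : 0 < (n : ℝ) + s := by linarith
    positivity
  rw [isLittleO_iff_tendsto' ?_]
  · refine ((tendsto_const_nhds (x := -(s * L))).div_atTop hlin).congr' ?_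
    filter_upwards [hden] with n hn
    rw [drift, rate, div_div_div_cancel_right₀ hn.ne']
  · filter_upwards [hnum, hden] with n hnum hden h
    exact absurd h (div_pos hnum hden).ne'

theorem error_succ {α θ s : ℝ} (hθ : θ ≠ 1) {e : ℕ → ℝ} {n : ℕ} (hn : n ≠ 0)
    (hns : (n : ℝ) + s ≠ 0)
    (hrec : e (n + 1) = e n + (α * n + θ * e n) / (n + s)) :
    e (n + 1) / (n + 1 : ℕ) - α / (1 - θ) =
      (1 - rate θ s n) * (e n / n - α / (1 - θ)) + drift s (α / (1 - θ)) n := by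
  have hθ' : 1 - θ ≠ 0 := sub_ne_zero.2 hθ.symm
  have hn' : (n : ℝ) ≠ 0 := Nat.cast_ne_zero.2 hn
  rw [hrec, rate, drift]
  push_cast
  field_simp
  ring

end DAPA

theorem stmt_6_general (α β θ : ℝ) (hθ1 : θ < 1)
    (e : ℕ → ℝ)
    (hrec : ∀ n : ℕ, 1 ≤ n →
      e (n + 1) = e n + (α * n + θ * e n) / (n + α + β - 1)) :
    Tendsto (fun n : ℕ => e n / n) atTop (nhds (α / (1 - θ))) := by
  set s := α + β - 1
  have hy : Tendsto (fun n : ℕ => e n / n - α / (1 - θ)) atTop (𝓝 0) := by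
    refine tendsto_zero_of_eq_one_sub_smul_add_of_tendsto_natCast_mul (sub_pos.2 hθ1)
      (DAPA.tendsto_natCast_mul_rate θ s) (DAPA.drift_isLittleO_rate hθ1 s (α / (1 - θ))) ?_
    filter_upwards [eventually_ge_atTop 1,
      tendsto_natCast_atTop_atTop.eventually_gt_atTop (-s)] with n hn hns
    rw [smul_eq_mul]
    refine DAPA.error_succ hθ1.ne (by omega) (by linarith) ?_
    rw [hrec n hn]
    ring
  simpa using hy.add_const (α / (1 - θ))

/-- Subcritical DAPA regime: the recurrence
`e(n+1) = e(n) + (α n + θ e(n)) / (n + α + β − 1)` with `e 1 = 0`, `α > 0`, `β ≥ 0`,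
`0 ≤ θ < 1` satisfies `e(n)/n → α/(1−θ)`. -/
theorem stmt_6 (α β θ : ℝ) (hα : 0 < α) (hβ : 0 ≤ β) (hθ0 : 0 ≤ θ) (hθ1 : θ < 1)
    (e : ℕ → ℝ) (h1 : e 1 = 0)
    (hrec : ∀ n : ℕ, 1 ≤ n →
      e (n + 1) = e n + (α * n + θ * e n) / (n + α + β - 1)) :
    Tendsto (fun n : ℕ => e n / n) atTop (nhds (α / (1 - θ))) :=
  stmt_6_general α β θ hθ1 e hrec
end

section
/- The recurrence e(n+1) = e(n) + (α n + e(n)) / (n + α + β − 1) with e(1) = 0 and parameters α > 0, β ≥ 0 satisfies e(n)/(n log n) → α as n → ∞. -/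
/-!
With `c = α + β - 1`, the recurrence says that `e n / (n + c)` grows by
`α n / ((n + c) (n + c + 1))` at each step, so `e n = α (n + c) S n` where `S n` is a partial sum
of terms asymptotic to `1 / (n + 1)`. Since the harmonic series diverges, `S n` is asymptotic to
the harmonic number `H n ~ log n`, hence `e n ~ α n log n`.
-/

open Filter Finset Asymptotics

lemma isEquivalent_natCast_add (c : ℝ) :
    (fun n : ℕ => (n : ℝ) + c) ~[atTop] fun n => (n : ℝ) :=
  IsEquivalent.refl.add_isLittleO (isLittleO_const_id_atTop c).natCast_atTop

lemma Asymptotics.IsEquivalent.sum_range {f g : ℕ → ℝ} (h : f ~[atTop] g) (hg : 0 ≤ g)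
    (h'g : Tendsto (fun n => ∑ i ∈ range n, g i) atTop atTop) :
    (fun n => ∑ i ∈ range n, f i) ~[atTop] fun n => ∑ i ∈ range n, g i := by
  have key := h.isLittleO.sum_range hg h'g
  simp only [Pi.sub_apply, sum_sub_distrib] at key
  exact key

lemma isEquivalent_sum_range_one_div_succ_log :
    (fun n => ∑ i ∈ range n, (1 / (i + 1) : ℝ)) ~[atTop] fun n => Real.log n := by
  have hH : (fun n => ∑ i ∈ range n, (1 / (i + 1) : ℝ)) = fun n => (harmonic n : ℝ) := by
    ext n
    simp [harmonic]
  rw [hH]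
  exact IsLittleO.isEquivalent <| (Real.tendsto_harmonic_sub_log.isBigO_one ℝ).trans_isLittleO
    Real.isLittleO_const_log_atTop.natCast_atTop

lemma isEquivalent_div_mul_one_div_succ (c : ℝ) :
    (fun k : ℕ => (k : ℝ) / ((k + c) * (k + c + 1))) ~[atTop] fun k => 1 / ((k : ℝ) + 1) := by
  have hsucc : (fun k : ℕ => (k : ℝ) + c + 1) ~[atTop] fun k => (k : ℝ) + 1 := by
    simpa only [add_assoc] using
      (isEquivalent_natCast_add (c + 1)).trans (isEquivalent_natCast_add 1).symm
  refine (IsEquivalent.refl.div ((isEquivalent_natCast_add c).mul hsucc)).congr_right ?_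
  filter_upwards [eventually_ne_atTop 0] with k hk
  have : (k : ℝ) ≠ 0 := Nat.cast_ne_zero.mpr hk
  simp only [Pi.div_apply, Pi.mul_apply]
  field_simp

lemma isEquivalent_sum_range_div_mul_log (c : ℝ) :
    (fun n => ∑ k ∈ range n, (k : ℝ) / ((k + c) * (k + c + 1))) ~[atTop]
      fun n => Real.log n :=
  ((isEquivalent_div_mul_one_div_succ c).sum_range (fun _ => by positivity)
    Real.tendsto_sum_range_one_div_nat_succ_atTop).trans isEquivalent_sum_range_one_div_succ_log

lemma eq_mul_sum_range_of_rec {a c : ℝ} (hc : -1 < c) {e : ℕ → ℝ} (h1 : e 1 = 0)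
    (hrec : ∀ n : ℕ, 1 ≤ n → e (n + 1) = e n + (a * n + e n) / (n + c)) {n : ℕ} (hn : 1 ≤ n) :
    e n = a * (n + c) * ∑ k ∈ range n, (k : ℝ) / ((k + c) * (k + c + 1)) := by
  induction n, hn using Nat.le_induction with
  | base => simp [h1]
  | succ n hn ih =>
    have hpos : 0 < (n : ℝ) + c := by
      have : (1 : ℝ) ≤ n := by exact_mod_cast hn
      linarith
    rw [hrec n hn, ih, sum_range_succ]
    push_cast
    field_simp
    ring

/-- Critical DAPA regime: the recurrence
`e(n+1) = e(n) + (α n + e(n)) / (n + α + β − 1)` with `e 1 = 0`, `α > 0`, `β ≥ 0`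
satisfies `e(n)/(n log n) → α`. -/
theorem stmt_7 (α β : ℝ) (hα : 0 < α) (hβ : 0 ≤ β)
    (e : ℕ → ℝ) (h1 : e 1 = 0)
    (hrec : ∀ n : ℕ, 1 ≤ n →
      e (n + 1) = e n + (α * n + e n) / (n + α + β - 1)) :
    Tendsto (fun n : ℕ => e n / (n * Real.log n)) atTop (nhds α) := by
  set c := α + β - 1
  have hc : -1 < c := by linarith
  have hrec' (n : ℕ) (hn : 1 ≤ n) : e (n + 1) = e n + (α * n + e n) / (n + c) := by
    rw [hrec n hn]
    ring
  have he : e ~[atTop] fun n => α * n * Real.log n :=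
    ((IsEquivalent.refl.mul (isEquivalent_natCast_add c)).mul
      (isEquivalent_sum_range_div_mul_log c)).congr_left <| by
        filter_upwards [eventually_ge_atTop 1] with n hn
        exact (eq_mul_sum_range_of_rec hc h1 hrec' hn).symm
  refine ((he.div IsEquivalent.refl).congr_right ?_).tendsto_const
  filter_upwards [eventually_ge_atTop 2] with n hn
  have hn' : (n : ℝ) ≠ 0 := by positivity
  have hlog : Real.log n ≠ 0 := (Real.log_pos (by exact_mod_cast hn)).ne'
  simp only [Pi.div_apply, Function.const_apply]
  field_simp
end

section
/- Let θ satisfy 1 < θ < 2 and consider the recurrence e(n+1) = e(n) + (α n + θ e(n)) / (n + α + β − 1) with e(1) = 0, α > 0, β ≥ 0. Then there exists a constant C > 0 such that e(n)/n^θ → C as n → ∞. -/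
/-!
With `a = α + β` and `x m = e (m + 1)` the recurrence is linear of first order,
`x (m + 1) = (1 + θ / (m + a)) x m + d m` with `d m = α (m + 1) / (m + a)`, so variation of
constants gives `e (m + 1) = P m * ∑ k < m, d k / P (k + 1)` with `P m = ∏ k < m, (1 + θ / (k + a))`.
The product is a ratio of Gamma values, and Euler's limit formula gives
`P (n + 1) / n ^ θ → Γ(a) / Γ(a + θ)`. Hence the summands are `O(k ^ (-θ))`, summable because
`θ > 1`, and `e n / n ^ θ` tends to `Γ(a) / Γ(a + θ)` times the (positive) sum of the series.
-/

open Filter Finset Topology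

theorem eq_prod_mul_sum_of_linear_rec {K : Type*} [Field K] {c d x : ℕ → K}
    (hc : ∀ k, c k ≠ 0) (hx : ∀ n, x (n + 1) = c n * x n + d n) (n : ℕ) :
    x n = (∏ k ∈ range n, c k) * (x 0 + ∑ k ∈ range n, d k / ∏ j ∈ range (k + 1), c j) := by
  induction n with
  | zero => simp
  | succ n ih =>
    have hP : ∏ j ∈ range (n + 1), c j ≠ 0 := prod_ne_zero_iff.2 fun j _ => hc j
    rw [hx, ih, sum_range_succ, ← add_assoc, mul_add _ (x 0 + _), mul_div_cancel₀ _ hP,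
      prod_range_succ]
    ring

namespace Real

theorem GammaSeq_div_GammaSeq_add {a θ : ℝ} (ha : 0 < a) (haθ : 0 < a + θ) {n : ℕ} (hn : n ≠ 0) :
    GammaSeq a n / GammaSeq (a + θ) n = (∏ j ∈ range (n + 1), (1 + θ / (j + a))) / n ^ θ := by
  have hn' : (0 : ℝ) < n := by positivity
  have hprod : ∏ j ∈ range (n + 1), (1 + θ / (j + a))
      = (∏ j ∈ range (n + 1), (a + θ + j)) / ∏ j ∈ range (n + 1), (a + j) := by
    rw [← prod_div_distrib]
    refine prod_congr rfl fun j _ => ?_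
    field_simp
    ring
  have hpos : ∀ s : ℝ, 0 < s → 0 < ∏ j ∈ range (n + 1), (s + j) := fun s hs =>
    prod_pos fun j _ => by positivity
  have hA := hpos a ha
  have hB := hpos _ haθ
  rw [hprod, GammaSeq, GammaSeq, rpow_add hn']
  field_simp

theorem tendsto_prod_one_add_div_rpow {a θ : ℝ} (ha : 0 < a) (haθ : 0 < a + θ) :
    Tendsto (fun n : ℕ => (∏ j ∈ range (n + 1), (1 + θ / (j + a))) / n ^ θ) atTop
      (𝓝 (Gamma a / Gamma (a + θ))) :=
  ((GammaSeq_tendsto_Gamma a).div (GammaSeq_tendsto_Gamma (a + θ))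
    (Gamma_pos_of_pos haθ).ne').congr' <|
      (eventually_ne_atTop 0).mono fun _ hn => GammaSeq_div_GammaSeq_add ha haθ hn

end Real

theorem summable_div_of_tendsto_div_rpow {u d : ℕ → ℝ} {θ α L : ℝ} (hθ : 1 < θ)
    (hd : Tendsto d atTop (𝓝 α)) (hu : Tendsto (fun k : ℕ => u k / k ^ θ) atTop (𝓝 L))
    (hL : L ≠ 0) : Summable fun k => d k / u k := by
  refine summable_of_isBigO_nat' (Real.summable_nat_rpow_inv.2 hθ)
    (Asymptotics.isBigO_of_div_tendsto_nhds ?_ (α / L) ((hd.div hu hL).congr' ?_))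
  all_goals filter_upwards [eventually_ne_atTop 0] with k hk
  · intro h
    exact absurd h (inv_ne_zero (Real.rpow_pos_of_pos (by positivity) θ).ne')
  · simp only [Pi.div_apply]
    rw [div_inv_eq_mul, div_div_eq_mul_div, div_mul_eq_mul_div]

theorem tendsto_natCast_div_add_rpow (x θ : ℝ) :
    Tendsto (fun n : ℕ => ((n : ℝ) / (n + x)) ^ θ) atTop (𝓝 1) := by
  simpa using (tendsto_natCast_div_add_atTop x).rpow_const (Or.inl one_ne_zero)

theorem tendsto_mul_add_one_div_add (α a : ℝ) :
    Tendsto (fun k : ℕ => α * (k + 1) / (k + a)) atTop (𝓝 α) := by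
  have := ((tendsto_add_atTop_iff_nat 1).2 (tendsto_natCast_div_add_atTop (a - 1))).const_mul α
  refine (mul_one α ▸ this).congr fun k => ?_
  push_cast
  ring

theorem tendsto_mul_div_add_one_rpow {P T : ℕ → ℝ} {θ L S : ℝ}
    (hP : Tendsto (fun n : ℕ => P (n + 1) / n ^ θ) atTop (𝓝 L)) (hT : Tendsto T atTop (𝓝 S)) :
    Tendsto (fun n : ℕ => P n * T n / ((n : ℝ) + 1) ^ θ) atTop (𝓝 (L * S)) := by
  refine (tendsto_add_atTop_iff_nat 1).1 ?_
  have hlim := (hP.mul (tendsto_natCast_div_add_rpow 2 θ)).mul ((tendsto_add_atTop_iff_nat 1).2 hT)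
  rw [mul_one] at hlim
  refine hlim.congr' ((eventually_ne_atTop 0).mono fun m hm => ?_)
  have hm' : (0 : ℝ) < m := by positivity
  rw [Real.div_rpow hm'.le (by positivity)]
  push_cast
  rw [add_assoc, one_add_one_eq_two]
  field_simp

section Recurrence

variable {α θ a : ℝ} {e : ℕ → ℝ}

noncomputable def recProd (θ a : ℝ) (n : ℕ) : ℝ := ∏ j ∈ range n, (1 + θ / (j + a))

theorem recProd_pos (hθ : 0 ≤ θ) (ha : 0 < a) (n : ℕ) : 0 < recProd θ a n :=
  prod_pos fun _ _ => by positivity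

theorem eq_recProd_mul_sum (hθ : 0 ≤ θ) (ha : 0 < a) (h1 : e 1 = 0)
    (hrec : ∀ n : ℕ, 1 ≤ n → e (n + 1) = e n + (α * n + θ * e n) / (n + a - 1)) (m : ℕ) :
    e (m + 1) = recProd θ a m *
      ∑ k ∈ range m, α * (k + 1) / (k + a) / recProd θ a (k + 1) := by
  rw [recProd, eq_prod_mul_sum_of_linear_rec (c := fun k => 1 + θ / (k + a))
    (d := fun k => α * (k + 1) / (k + a)) (x := fun m => e (m + 1)) (fun k => by positivity)
    (fun m => ?_) m, h1, zero_add]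
  · rfl
  have hm : (m : ℝ) + a ≠ 0 := by positivity
  rw [hrec _ (by omega), show ((m + 1 : ℕ) : ℝ) + a - 1 = m + a by push_cast; ring]
  push_cast
  field_simp
  ring

end Recurrence

theorem stmt_8_general (α β θ : ℝ) (hα : 0 < α) (hβ : 0 ≤ β) (hθ1 : 1 < θ)
    (e : ℕ → ℝ) (h1 : e 1 = 0)
    (hrec : ∀ n : ℕ, 1 ≤ n →
      e (n + 1) = e n + (α * n + θ * e n) / (n + α + β - 1)) :
    ∃ C : ℝ, 0 < C ∧
      Tendsto (fun n : ℕ => e n / (n : ℝ) ^ θ) atTop (nhds C) := by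
  have hrec' : ∀ n : ℕ, 1 ≤ n →
      e (n + 1) = e n + (α * n + θ * e n) / (n + (α + β) - 1) := fun n hn => by
    rw [hrec n hn, add_assoc]
  set a := α + β
  have ha : 0 < a := by positivity
  have hθ : 0 ≤ θ := by linarith
  have hP : Tendsto (fun n : ℕ => recProd θ a (n + 1) / n ^ θ) atTop
      (𝓝 (Real.Gamma a / Real.Gamma (a + θ))) :=
    Real.tendsto_prod_one_add_div_rpow ha (by linarith)
  have hL : 0 < Real.Gamma a / Real.Gamma (a + θ) :=
    div_pos (Real.Gamma_pos_of_pos ha) (Real.Gamma_pos_of_pos (by linarith))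
  have hsum := summable_div_of_tendsto_div_rpow hθ1 (tendsto_mul_add_one_div_add α a) hP hL.ne'
  have hterm : ∀ k : ℕ, 0 < α * (k + 1) / (k + a) / recProd θ a (k + 1) := fun k =>
    div_pos (by positivity) (recProd_pos hθ ha _)
  refine ⟨_, mul_pos hL (hsum.tsum_pos (fun k => (hterm k).le) 0 (hterm 0)), ?_⟩
  refine (tendsto_add_atTop_iff_nat 1).1 <|
    (tendsto_mul_div_add_one_rpow hP hsum.hasSum.tendsto_sum_nat).congr fun m => ?_
  rw [eq_recProd_mul_sum hθ ha h1 hrec' m]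
  push_cast
  rfl

/-- Supercritical DAPA regime: for `1 < θ < 2` the recurrence
`e(n+1) = e(n) + (α n + θ e(n)) / (n + α + β − 1)` with `e 1 = 0`, `α > 0`, `β ≥ 0`
satisfies `e(n)/n^θ → C` for some constant `C > 0`. -/
theorem stmt_8 (α β θ : ℝ) (hα : 0 < α) (hβ : 0 ≤ β) (hθ1 : 1 < θ) (hθ2 : θ < 2)
    (e : ℕ → ℝ) (h1 : e 1 = 0)
    (hrec : ∀ n : ℕ, 1 ≤ n →
      e (n + 1) = e n + (α * n + θ * e n) / (n + α + β - 1)) :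
    ∃ C : ℝ, 0 < C ∧
      Tendsto (fun n : ℕ => e n / (n : ℝ) ^ θ) atTop (nhds C) :=
  stmt_8_general α β θ hα hβ hθ1 e h1 hrec
end
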